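/- NPMLE tail mass bound: let Ĥ satisfy ψ(ξ) ≤ 1 for all ξ and ψ = 1 Ĥ-a.e. (the NPMLE optimality conditions), with ψ(ξ) = (1/n)Σᵢ φ_σ(Xᵢ-ξ)/f_Ĥ(Xᵢ). For a nonempty set S ⊆ ℝ with distance function d_S, let r = √(2σ² log(2n)) and A_R = {ξ : d_S(ξ) > R}. Then for any R > r, Ĥ(A_R) ≤ (2/n) Σᵢ 1(d_S(Xᵢ) > R - r). -/

import Mathlib

open MeasureTheory ProbabilityTheory Real

/-!
On the support of `Ĥ` we have `ψ = 1`, i.e. the ratios `tᵢ(ξ) = φ_σ(Xᵢ - ξ) / f_Ĥ(Xᵢ)` sum to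
`n`. The condition `ψ(Xⱼ) ≤ 1`, kept only through its `j`-th term, gives `f_Ĥ(Xⱼ) ≥ φ_σ(0)/n`; and
if `d_S(ξ) > R` while `d_S(Xᵢ) ≤ R - r`, then `|Xᵢ - ξ| > r`, so `φ_σ(Xᵢ - ξ) ≤ φ_σ(0)/(2n)` and
`tᵢ(ξ) ≤ 1/2`. Hence on `A_R` the ratios with `d_S(Xᵢ) > R - r` carry at least half of the total
`n`, and integrating them against `Ĥ` (each `tᵢ` has `Ĥ`-integral `1`) bounds `Ĥ(A_R)` by Markov.
-/

open Finset

namespace ProbabilityTheory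

lemma gaussianPDFReal_le_peak (μ : ℝ) (v : NNReal) (x : ℝ) :
    gaussianPDFReal μ v x ≤ (√(2 * π * v))⁻¹ :=
  mul_le_of_le_one_right (by positivity) (exp_le_one_iff.mpr (by
    rw [neg_div]; exact neg_nonpos.mpr (by positivity)))

@[simp]
lemma gaussianPDFReal_self (μ : ℝ) (v : NNReal) :
    gaussianPDFReal μ v μ = (√(2 * π * v))⁻¹ := by
  simp [gaussianPDFReal]

lemma gaussianPDFReal_le_peak_div {μ x c : ℝ} {v : NNReal} (hv : v ≠ 0) (hc : 0 < c)
    (hfar : 2 * v * log c ≤ (x - μ) ^ 2) :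
    gaussianPDFReal μ v x ≤ (√(2 * π * v))⁻¹ / c := by
  have hexp : rexp (-(x - μ) ^ 2 / (2 * v)) ≤ c⁻¹ := by
    rw [← exp_log hc, ← exp_neg, exp_le_exp, neg_div, neg_le_neg_iff, le_div_iff₀ (by positivity)]
    linarith
  rw [gaussianPDFReal, div_eq_mul_inv _ c]
  gcongr

lemma integrable_gaussianPDFReal_mean {μ : Measure ℝ} [IsFiniteMeasure μ] (v : NNReal) (x : ℝ) :
    Integrable (fun ξ ↦ gaussianPDFReal ξ v x) μ := by
  have hmeas : Measurable fun ξ ↦ gaussianPDFReal ξ v x :=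
    measurable_uncurry_gaussianPDFReal.comp (f := fun ξ ↦ (ξ, v, x)) (by fun_prop)
  refine .of_bound hmeas.aestronglyMeasurable (√(2 * π * v))⁻¹ (ae_of_all _ fun ξ ↦ ?_)
  rw [norm_of_nonneg (gaussianPDFReal_nonneg _ _ _)]
  exact gaussianPDFReal_le_peak _ _ _

end ProbabilityTheory

lemma Finset.card_div_two_le_sum_filter {ι : Type*} (s : Finset ι) (p : ι → Prop)
    [DecidablePred p] {t : ι → ℝ} (hsum : ∑ i ∈ s, t i = #s)
    (hsmall : ∀ i ∈ s, ¬ p i → t i ≤ 1 / 2) :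
    (#s : ℝ) / 2 ≤ ∑ i ∈ s with p i, t i := by
  have hnot : ∑ i ∈ s with ¬ p i, t i ≤ #s / 2 :=
    calc ∑ i ∈ s with ¬ p i, t i
        ≤ ∑ i ∈ s with ¬ p i, (1 / 2 : ℝ) :=
          sum_le_sum fun i hi ↦ hsmall i (mem_filter.mp hi).1 (mem_filter.mp hi).2
      _ ≤ #s / 2 := by
          rw [sum_const, nsmul_eq_mul]
          have : (#(s.filter (¬ p ·)) : ℝ) ≤ #s := by exact_mod_cast card_filter_le _ _
          linarith
  linarith [sum_filter_add_sum_filter_not s p t]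

lemma MeasureTheory.measure_le_ofReal_integral_of_one_le {α : Type*} [MeasurableSpace α]
    {μ : Measure α} [IsFiniteMeasure μ] {A : Set α} {h : α → ℝ} (h_nonneg : ∀ x, 0 ≤ h x)
    (h_int : Integrable h μ) (h_one : ∀ᵐ x ∂μ, x ∈ A → 1 ≤ h x) :
    μ A ≤ ENNReal.ofReal (∫ x, h x ∂μ) := by
  calc μ A ≤ μ {x | 1 ≤ h x} := measure_mono_ae (h_one.mono fun x hx ↦ hx)
    _ = ENNReal.ofReal (μ.real {x | 1 ≤ h x}) := (ofReal_measureReal (measure_ne_top _ _)).symm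
    _ ≤ ENNReal.ofReal (∫ x, h x ∂μ) := by
        gcongr
        simpa using mul_meas_ge_le_integral_of_nonneg (ae_of_all _ h_nonneg) h_int 1

lemma Metric.lt_dist_of_lt_infDist_of_infDist_le {α : Type*} [PseudoMetricSpace α] {s : Set α}
    {x y : α} {r R : ℝ} (hy : R < infDist y s) (hx : infDist x s ≤ R - r) : r < dist x y := by
  linarith [infDist_le_infDist_add_dist (x := y) (y := x) (s := s), dist_comm x y]

section NPMLE

/-- The gradient `ψ` of the NPMLE log-likelihood at the mixture density `f`. -/
noncomputable def npmleGradient {n : ℕ} (v : NNReal) (X : Fin n → ℝ) (f : ℝ → ℝ) (ξ : ℝ) : ℝ :=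
  (1 / (n : ℝ)) * ∑ i, gaussianPDFReal ξ v (X i) / f (X i)

variable {n : ℕ} {v : NNReal} {X : Fin n → ℝ} {f : ℝ → ℝ}

lemma peak_div_le_of_npmleGradient_le_one (hn : 0 < n) (hpos : ∀ i, 0 < f (X i))
    (hopt : ∀ ξ, npmleGradient v X f ξ ≤ 1) (j : Fin n) :
    (√(2 * π * v))⁻¹ / n ≤ f (X j) := by
  have hn' : (0 : ℝ) < n := by exact_mod_cast hn
  have hterm : (√(2 * π * v))⁻¹ / f (X j) ≤ ∑ i, gaussianPDFReal (X j) v (X i) / f (X i) := by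
    simpa using single_le_sum (f := fun i ↦ gaussianPDFReal (X j) v (X i) / f (X i))
      (fun i _ ↦ div_nonneg (gaussianPDFReal_nonneg _ _ _) (hpos i).le) (mem_univ j)
  have := (hopt (X j)).trans' (mul_le_mul_of_nonneg_left hterm (by positivity))
  rw [one_div_mul_eq_div, div_le_one hn', div_le_iff₀ (hpos j)] at this
  rwa [div_le_iff₀ hn', mul_comm (f (X j))]

lemma gaussianPDFReal_div_le_half (hv : v ≠ 0) (hn : 0 < n) (hpos : ∀ i, 0 < f (X i))
    (hopt : ∀ ξ, npmleGradient v X f ξ ≤ 1) {ξ : ℝ} {i : Fin n}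
    (hfar : 2 * v * log (2 * n) ≤ (X i - ξ) ^ 2) :
    gaussianPDFReal ξ v (X i) / f (X i) ≤ 1 / 2 := by
  have hn' : (0 : ℝ) < n := by exact_mod_cast hn
  calc gaussianPDFReal ξ v (X i) / f (X i)
      ≤ ((√(2 * π * v))⁻¹ / (2 * n)) / ((√(2 * π * v))⁻¹ / n) :=
        div_le_div₀ (by positivity) (gaussianPDFReal_le_peak_div hv (by positivity) hfar)
          (by positivity) (peak_div_le_of_npmleGradient_le_one hn hpos hopt i)
    _ = 1 / 2 := by
        have : (√(2 * π * v))⁻¹ ≠ 0 := by positivity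
        field_simp

lemma one_le_two_div_mul_sum_filter (hv : v ≠ 0) (hn : 0 < n) (hpos : ∀ i, 0 < f (X i))
    (hopt : ∀ ξ, npmleGradient v X f ξ ≤ 1) (p : Fin n → Prop) [DecidablePred p] {ξ : ℝ}
    (hξ : npmleGradient v X f ξ = 1) (hfar : ∀ i, ¬ p i → 2 * v * log (2 * n) ≤ (X i - ξ) ^ 2) :
    1 ≤ 2 / (n : ℝ) * ∑ i with p i, gaussianPDFReal ξ v (X i) / f (X i) := by
  have hn' : (0 : ℝ) < n := by exact_mod_cast hn
  have hsum : ∑ i, gaussianPDFReal ξ v (X i) / f (X i) = #(univ : Finset (Fin n)) := by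
    rw [npmleGradient, one_div_mul_eq_div, div_eq_one_iff_eq hn'.ne'] at hξ
    simpa using hξ
  have := card_div_two_le_sum_filter univ p hsum fun i _ hi ↦
    gaussianPDFReal_div_le_half hv hn hpos hopt (hfar i hi)
  rw [card_univ, Fintype.card_fin] at this
  rw [div_mul_eq_mul_div, le_div_iff₀ hn']
  linarith

lemma integral_gaussianPDFReal_div_mixture {H : Measure ℝ} [IsFiniteMeasure H]
    (hf : ∀ x, f x = ∫ ξ, gaussianPDFReal ξ v x ∂H) {x : ℝ} (hx : 0 < f x) :
    ∫ ξ, gaussianPDFReal ξ v x / f x ∂H = 1 := by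
  rw [integral_div, ← hf, div_self hx.ne']

end NPMLE

theorem npmle_tail_mass_bound_general
    (n : ℕ) (hn : 0 < n) (X : Fin n → ℝ) (σ : ℝ) (hσ : 0 < σ)
    (S : Set ℝ)
    (Hhat : Measure ℝ) [IsProbabilityMeasure Hhat]
    (f : ℝ → ℝ)
    (hf : ∀ x, f x = ∫ ξ, gaussianPDFReal ξ ((σ ^ 2).toNNReal) x ∂Hhat)
    (hpos : ∀ i, 0 < f (X i))
    (ψ : ℝ → ℝ)
    (hψ : ∀ ξ, ψ ξ =
      (1 / (n : ℝ)) * ∑ i, gaussianPDFReal ξ ((σ ^ 2).toNNReal) (X i) / f (X i))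
    (hopt : ∀ ξ, ψ ξ ≤ 1)
    (hae : ∀ᵐ ξ ∂Hhat, ψ ξ = 1)
    (r R : ℝ) (hr : r = Real.sqrt (2 * σ ^ 2 * Real.log (2 * n))) :
    Hhat {ξ : ℝ | R < Metric.infDist ξ S}
      ≤ ENNReal.ofReal ((2 / (n : ℝ)) *
          ∑ i, if R - r < Metric.infDist (X i) S then (1 : ℝ) else 0) := by
  obtain rfl : ψ = npmleGradient (σ ^ 2).toNNReal X f := funext hψ
  have hv : (σ ^ 2).toNNReal ≠ 0 := by simpa using hσ.ne'
  set p : Fin n → Prop := fun i ↦ R - r < Metric.infDist (X i) S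
  have hfar : ∀ ξ, R < Metric.infDist ξ S → ∀ i, ¬ p i →
      2 * ((σ ^ 2).toNNReal : ℝ) * log (2 * n) ≤ (X i - ξ) ^ 2 := by
    intro ξ hξ i hi
    have hrd := (Metric.lt_dist_of_lt_infDist_of_infDist_le hξ (not_lt.mp hi)).le
    rw [hr, Real.dist_eq, Real.sqrt_le_iff, sq_abs] at hrd
    rw [Real.coe_toNNReal _ (sq_nonneg σ)]
    exact hrd.2
  have hratio_int : ∀ i, Integrable
      (fun ξ ↦ gaussianPDFReal ξ (σ ^ 2).toNNReal (X i) / f (X i)) Hhat :=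
    fun i ↦ (integrable_gaussianPDFReal_mean _ _).div_const _
  calc Hhat {ξ | R < Metric.infDist ξ S}
      ≤ ENNReal.ofReal (∫ ξ, 2 / (n : ℝ) *
          ∑ i with p i, gaussianPDFReal ξ (σ ^ 2).toNNReal (X i) / f (X i) ∂Hhat) :=
        measure_le_ofReal_integral_of_one_le
          (fun ξ ↦ mul_nonneg (by positivity) (sum_nonneg fun i _ ↦
            div_nonneg (gaussianPDFReal_nonneg _ _ _) (hpos i).le))
          ((integrable_finsetSum _ fun i _ ↦ hratio_int i).const_mul _)
          (hae.mono fun ξ hξ hA ↦ one_le_two_div_mul_sum_filter hv hn hpos hopt p hξ (hfar ξ hA))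
    _ = _ := by
        rw [integral_const_mul, integral_finsetSum _ fun i _ ↦ hratio_int i]
        simp_rw [integral_gaussianPDFReal_div_mixture hf (hpos _), sum_const, sum_boole]
        simp [p]

/-- NPMLE tail mass bound: let `Ĥ` satisfy the NPMLE optimality conditions `ψ(ξ) ≤ 1` for
all `ξ` and `ψ = 1` `Ĥ`-a.e., where `ψ(ξ) = (1/n)Σᵢ φ_σ(Xᵢ-ξ)/f_Ĥ(Xᵢ)`.  For a nonempty
`S ⊆ ℝ` with distance function `d_S`, `r = √(2σ² log(2n))` and any `R > r`,
`Ĥ{ξ : d_S(ξ) > R} ≤ (2/n) Σᵢ 1(d_S(Xᵢ) > R - r)`. -/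
theorem npmle_tail_mass_bound
    (n : ℕ) (hn : 0 < n) (X : Fin n → ℝ) (σ : ℝ) (hσ : 0 < σ)
    (S : Set ℝ) (hS : S.Nonempty)
    (Hhat : Measure ℝ) [IsProbabilityMeasure Hhat]
    (f : ℝ → ℝ)
    (hf : ∀ x, f x = ∫ ξ, gaussianPDFReal ξ ((σ ^ 2).toNNReal) x ∂Hhat)
    (hpos : ∀ i, 0 < f (X i))
    (ψ : ℝ → ℝ)
    (hψ : ∀ ξ, ψ ξ =
      (1 / (n : ℝ)) * ∑ i, gaussianPDFReal ξ ((σ ^ 2).toNNReal) (X i) / f (X i))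
    (hopt : ∀ ξ, ψ ξ ≤ 1)
    (hae : ∀ᵐ ξ ∂Hhat, ψ ξ = 1)
    (r R : ℝ) (hr : r = Real.sqrt (2 * σ ^ 2 * Real.log (2 * n))) (hR : r < R) :
    Hhat {ξ : ℝ | R < Metric.infDist ξ S}
      ≤ ENNReal.ofReal ((2 / (n : ℝ)) *
          ∑ i, if R - r < Metric.infDist (X i) S then (1 : ℝ) else 0) :=
  npmle_tail_mass_bound_general n hn X σ hσ S Hhat f hf hpos ψ hψ hopt hae r R hr
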